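/- Let ▷ be a relaxed weak post-Hopf structure on Sweedler's 4-dimensional Hopf algebra H₄ with 1 ▷ g = g, 1 ▷ ν = 0, and g ▷ g = 1. Then ▷ is completely determined: 1▷1 = 1, 1▷g = g, 1▷ν = 0, 1▷gν = 0; g▷1 = 1, g▷g = 1, g▷ν = 0, g▷gν = 0; and x▷y = 0 whenever x ∈ {ν, gν} and y ∈ {1, g, ν, gν}. (This is structure (v) of the classification.) -/

import Mathlib

open TensorProduct Coalgebra

/-- `H`, together with the chosen elements `g` and `ν`, is a copy of Sweedler's
4-dimensional Hopf algebra over `k`: `{1, g, ν, gν}` is a basis, the defining relations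
`g² = 1`, `ν² = 0`, `gν + νg = 0` hold, and the comultiplication, counit and antipode
take the prescribed values on `g` and `ν`. -/
structure IsSweedlerHopf (k : Type*) {H : Type*} [Field k] [Ring H]
    [HopfAlgebra k H] (g ν : H) : Prop where
  g_sq : g * g = 1
  ν_sq : ν * ν = 0
  anticomm : g * ν + ν * g = 0
  comul_g : comul (R := k) g = g ⊗ₜ[k] g
  comul_ν : comul (R := k) ν = g ⊗ₜ[k] ν + ν ⊗ₜ[k] (1 : H)
  counit_g : counit (R := k) g = 1
  counit_ν : counit (R := k) ν = 0
  antipode_g : HopfAlgebra.antipode (R := k) g = g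
  antipode_ν : HopfAlgebra.antipode (R := k) ν = -(g * ν)
  basis_indep : LinearIndependent k ![(1 : H), g, ν, g * ν]
  basis_span : Submodule.span k {(1 : H), g, ν, g * ν} = ⊤

/-- A relaxed weak post-Hopf structure on a Hopf algebra `H` over `k`:
a bilinear operation `t` (written `x ▷ y := t x y`) which, as a map `H ⊗ H → H`, is a
coalgebra homomorphism (i.e. `Δ(x ▷ y) = (x₁ ▷ y₁) ⊗ (x₂ ▷ y₂)` and
`ε(x ▷ y) = ε(x) ε(y)`), and which satisfies `x ▷ (y z) = (x₁ ▷ y) (x₂ ▷ z)` and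
`x ▷ (y ▷ z) = (x₁ (x₂ ▷ y)) ▷ z` (Sweedler notation expressed via `comul`). -/
structure IsRelaxedWeakPostHopf (k : Type*) {H : Type*} [CommSemiring k] [Semiring H]
    [HopfAlgebra k H] (t : H →ₗ[k] H →ₗ[k] H) : Prop where
  comul_hom : ∀ x y : H,
    comul (R := k) (t x y) =
      (TensorProduct.map (TensorProduct.lift t) (TensorProduct.lift t))
        ((TensorProduct.tensorTensorTensorComm k H H H H)
          (comul (R := k) x ⊗ₜ[k] comul (R := k) y))
  counit_hom : ∀ x y : H,
    counit (R := k) (t x y) = counit (R := k) x * counit (R := k) y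
  mul_compat : ∀ x y z : H,
    t x (y * z) =
      (LinearMap.mul' k H ∘ₗ TensorProduct.map (t.flip y) (t.flip z)) (comul (R := k) x)
  act_compat : ∀ x y z : H,
    t x (t y z) =
      (t.flip z ∘ₗ LinearMap.mul' k H ∘ₗ TensorProduct.map LinearMap.id (t.flip y))
        (comul (R := k) x)

section AuxSweedler

variable {k H : Type*} [Field k] [Ring H] [HopfAlgebra k H] {g ν : H}

noncomputable def swB (hs : IsSweedlerHopf k g ν) : Module.Basis (Fin 4) k H :=
  Module.Basis.mk hs.basis_indep (by
    have : Set.range ![(1 : H), g, ν, g * ν] = {(1 : H), g, ν, g * ν} := by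
      rw [Matrix.range_cons, Matrix.range_cons, Matrix.range_cons, Matrix.range_cons_empty]
      simp only [Set.singleton_union]
    rw [this, hs.basis_span])

lemma swB0 (hs : IsSweedlerHopf k g ν) : swB hs 0 = 1 := by simp [swB]
lemma swB1 (hs : IsSweedlerHopf k g ν) : swB hs 1 = g := by simp [swB]
lemma swB2 (hs : IsSweedlerHopf k g ν) : swB hs 2 = ν := by simp [swB]
lemma swB3 (hs : IsSweedlerHopf k g ν) : swB hs 3 = g * ν := by simp [swB]

lemma repr1 (hs : IsSweedlerHopf k g ν) : (swB hs).repr 1 = Finsupp.single 0 1 := by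
  have h := (swB hs).repr_self 0; rwa [swB0 hs] at h
lemma reprg (hs : IsSweedlerHopf k g ν) : (swB hs).repr g = Finsupp.single 1 1 := by
  have h := (swB hs).repr_self 1; rwa [swB1 hs] at h
lemma reprν (hs : IsSweedlerHopf k g ν) : (swB hs).repr ν = Finsupp.single 2 1 := by
  have h := (swB hs).repr_self 2; rwa [swB2 hs] at h
lemma reprgν (hs : IsSweedlerHopf k g ν) : (swB hs).repr (g * ν) = Finsupp.single 3 1 := by
  have h := (swB hs).repr_self 3; rwa [swB3 hs] at h

lemma sw_expand (hs : IsSweedlerHopf k g ν) (a : H) :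
    a = (swB hs).repr a 0 • (1 : H) + (swB hs).repr a 1 • g + (swB hs).repr a 2 • ν
      + (swB hs).repr a 3 • (g * ν) := by
  have h := (swB hs).sum_repr a
  rw [Fin.sum_univ_four, swB0 hs, swB1 hs, swB2 hs, swB3 hs] at h
  exact h.symm

lemma comul_gν (hs : IsSweedlerHopf k g ν) :
    comul (R := k) (g * ν) = (1 : H) ⊗ₜ[k] (g * ν) + (g * ν) ⊗ₜ[k] g := by
  rw [Bialgebra.comul_mul, hs.comul_g, hs.comul_ν, mul_add]
  rw [Algebra.TensorProduct.tmul_mul_tmul, Algebra.TensorProduct.tmul_mul_tmul,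
    hs.g_sq, mul_one]

lemma swT_repr (hs : IsSweedlerHopf k g ν) (x y : H) (p : Fin 4 × Fin 4) :
    ((swB hs).tensorProduct (swB hs)).repr (x ⊗ₜ[k] y) p
      = (swB hs).repr x p.1 * (swB hs).repr y p.2 := by
  obtain ⟨i, j⟩ := p
  rw [Module.Basis.tensorProduct_repr_tmul_apply, smul_eq_mul, mul_comm]

lemma tcoeff (hs : IsSweedlerHopf k g ν) {x y : H ⊗[k] H} (hxy : x = y) (i j : Fin 4) :
    ((swB hs).tensorProduct (swB hs)).repr x (i, j)
      = ((swB hs).tensorProduct (swB hs)).repr y (i, j) := by rw [hxy]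

lemma hcoeff (hs : IsSweedlerHopf k g ν) {x y : H} (hxy : x = y) (i : Fin 4) :
    (swB hs).repr x i = (swB hs).repr y i := by rw [hxy]

/-- primitive implies zero -/
lemma sw_prim (hs : IsSweedlerHopf k g ν) {a : H}
    (h : comul (R := k) a = (1 : H) ⊗ₜ[k] a + a ⊗ₜ[k] (1 : H)) : a = 0 := by
  have ha := sw_expand hs a
  rw [ha] at h
  have h00 := tcoeff hs h 0 0
  have h11 := tcoeff hs h 1 1
  have h12 := tcoeff hs h 1 2
  have h31 := tcoeff hs h 3 1
  simp [map_add, map_smul, Bialgebra.comul_one, Algebra.TensorProduct.one_def,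
    hs.comul_g, hs.comul_ν, comul_gν hs, tmul_add, add_tmul, ← smul_tmul', tmul_smul,
    swT_repr hs, repr1 hs, reprg hs, reprν hs, reprgν hs,
    Finsupp.single_apply, Finsupp.add_apply, Finsupp.smul_apply, smul_eq_mul] at h00 h11 h12 h31
  rw [ha, h00, h11, h12, h31]
  simp

/-- (g,1)-primitive -/
lemma sw_g1prim (hs : IsSweedlerHopf k g ν) {a : H}
    (h : comul (R := k) a = g ⊗ₜ[k] a + a ⊗ₜ[k] (1 : H)) :
    ∃ α γ : k, a = α • ((1 : H) - g) + γ • ν := by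
  have ha := sw_expand hs a
  rw [ha] at h
  have h10 := tcoeff hs h 1 0
  have h03 := tcoeff hs h 0 3
  simp [map_add, map_smul, Bialgebra.comul_one, Algebra.TensorProduct.one_def,
    hs.comul_g, hs.comul_ν, comul_gν hs, tmul_add, add_tmul, ← smul_tmul', tmul_smul,
    swT_repr hs, repr1 hs, reprg hs, reprν hs, reprgν hs,
    Finsupp.single_apply, Finsupp.add_apply, Finsupp.smul_apply, smul_eq_mul] at h10 h03
  refine ⟨(swB hs).repr a 0, (swB hs).repr a 2, ?_⟩
  have h1 : (swB hs).repr a 1 = -(swB hs).repr a 0 := by linear_combination -h10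
  conv_lhs => rw [ha]
  rw [h03, h1]
  module

/-- (1,g)-primitive -/
lemma sw_1gprim (hs : IsSweedlerHopf k g ν) {a : H}
    (h : comul (R := k) a = (1 : H) ⊗ₜ[k] a + a ⊗ₜ[k] g) :
    ∃ α δ : k, a = α • ((1 : H) - g) + δ • (g * ν) := by
  have ha := sw_expand hs a
  rw [ha] at h
  have h01 := tcoeff hs h 0 1
  have h12 := tcoeff hs h 1 2
  simp [map_add, map_smul, Bialgebra.comul_one, Algebra.TensorProduct.one_def,
    hs.comul_g, hs.comul_ν, comul_gν hs, tmul_add, add_tmul, ← smul_tmul', tmul_smul,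
    swT_repr hs, repr1 hs, reprg hs, reprν hs, reprgν hs,
    Finsupp.single_apply, Finsupp.add_apply, Finsupp.smul_apply, smul_eq_mul] at h01 h12
  refine ⟨(swB hs).repr a 0, (swB hs).repr a 3, ?_⟩
  have h1 : (swB hs).repr a 1 = -(swB hs).repr a 0 := by linear_combination -h01
  conv_lhs => rw [ha]
  rw [h12, h1]
  module

end AuxSweedler

/-- A relaxed weak post-Hopf structure on Sweedler's Hopf algebra with `1 ▷ g = g`,
`1 ▷ ν = 0` and `g ▷ g = 1` is completely determined: it is structure (v). -/
theorem sweedler_structure_v {k H : Type*} [Field k] [CharZero k] [Ring H] [HopfAlgebra k H]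
    (g ν : H) (hs : IsSweedlerHopf k g ν)
    (t : H →ₗ[k] H →ₗ[k] H) (ht : IsRelaxedWeakPostHopf k t)
    (h1g : t 1 g = g) (h1ν : t 1 ν = 0) (hgg : t g g = 1) :
    (t (1 : H) (1 : H) = (1 : H) ∧
      t (1 : H) g = g ∧
      t (1 : H) ν = 0 ∧
      t (1 : H) (g * ν) = 0 ∧
      t g (1 : H) = (1 : H) ∧
      t g g = (1 : H) ∧
      t g ν = 0 ∧
      t g (g * ν) = 0) ∧
      (∀ x ∈ ({ν, (g * ν)} : Set H), ∀ y ∈ ({1, g, ν, (g * ν)} : Set H), t x y = 0) := by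
  have hνg_eq : ν * g = -(g * ν) := eq_neg_of_add_eq_zero_right hs.anticomm
  have hgνg : (g * ν) * g = -ν := by
    rw [mul_assoc, hνg_eq, mul_neg, ← mul_assoc, hs.g_sq, one_mul]
  -- act1 : 1 ▷ (y ▷ z) = (1 ▷ y) ▷ z
  have act1 : ∀ y z : H, t 1 (t y z) = t (t 1 y) z := by
    intro y z
    have h := ht.act_compat 1 y z
    rw [Bialgebra.comul_one, Algebra.TensorProduct.one_def] at h
    simpa only [LinearMap.coe_comp, Function.comp_apply, TensorProduct.map_tmul,
      LinearMap.mul'_apply, LinearMap.flip_apply, LinearMap.id_coe, id_eq, one_mul] using h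
  -- 1 ▷ 1 = 1
  have h11 : t 1 1 = 1 := by
    have h := ht.mul_compat 1 g g
    rw [hs.g_sq, Bialgebra.comul_one, Algebra.TensorProduct.one_def] at h
    simpa only [LinearMap.coe_comp, Function.comp_apply, TensorProduct.map_tmul,
      LinearMap.mul'_apply, LinearMap.flip_apply, h1g, hs.g_sq] using h
  -- g ▷ 1 = 1
  have hg1 : t g 1 = 1 := by
    have h := ht.mul_compat g g g
    rw [hs.g_sq, hs.comul_g] at h
    simpa only [LinearMap.coe_comp, Function.comp_apply, TensorProduct.map_tmul,
      LinearMap.mul'_apply, LinearMap.flip_apply, hgg, one_mul] using h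
  -- 1 ▷ gν = 0
  have h1gν : t 1 (g * ν) = 0 := by
    have h := ht.mul_compat 1 g ν
    rw [Bialgebra.comul_one, Algebra.TensorProduct.one_def] at h
    simpa only [LinearMap.coe_comp, Function.comp_apply, TensorProduct.map_tmul,
      LinearMap.mul'_apply, LinearMap.flip_apply, h1g, h1ν, mul_zero] using h
  -- g ▷ ν = 0
  have hgν : t g ν = 0 := by
    have h := ht.comul_hom g ν
    rw [hs.comul_g, hs.comul_ν] at h
    simp only [tmul_add, add_tmul, map_add, tensorTensorTensorComm_tmul,
      TensorProduct.map_tmul, lift.tmul] at h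
    rw [hgg, hg1] at h
    exact sw_prim hs h
  -- g ▷ gν = 0
  have hggν : t g (g * ν) = 0 := by
    have h := ht.mul_compat g g ν
    rw [hs.comul_g] at h
    simpa only [LinearMap.coe_comp, Function.comp_apply, TensorProduct.map_tmul,
      LinearMap.mul'_apply, LinearMap.flip_apply, hgg, hgν, mul_zero] using h
  -- ν ▷ 1 = 0
  have hν1 : t ν 1 = 0 := by
    have h := ht.comul_hom ν 1
    rw [hs.comul_ν, Bialgebra.comul_one, Algebra.TensorProduct.one_def] at h
    simp only [tmul_add, add_tmul, map_add, tensorTensorTensorComm_tmul,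
      TensorProduct.map_tmul, lift.tmul] at h
    rw [hg1, h11] at h
    exact sw_prim hs h
  -- gν ▷ 1 = 0
  have hgν1 : t (g * ν) 1 = 0 := by
    have h := ht.comul_hom (g * ν) 1
    rw [comul_gν hs, Bialgebra.comul_one, Algebra.TensorProduct.one_def] at h
    simp only [tmul_add, add_tmul, map_add, tensorTensorTensorComm_tmul,
      TensorProduct.map_tmul, lift.tmul] at h
    rw [h11, hg1] at h
    exact sw_prim hs h
  -- ν ▷ g = 0
  have hνg : t ν g = 0 := by
    have hp := ht.comul_hom ν g
    rw [hs.comul_ν, hs.comul_g] at hp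
    simp only [tmul_add, add_tmul, map_add, tensorTensorTensorComm_tmul,
      TensorProduct.map_tmul, lift.tmul] at hp
    rw [hgg, h1g] at hp
    obtain ⟨α, δ, ha⟩ := sw_1gprim hs hp
    have hact := act1 ν g
    rw [h1ν] at hact
    simp only [map_zero, LinearMap.zero_apply] at hact
    rw [ha] at hact
    simp only [map_add, map_smul, map_sub, h11, h1g, h1gν, smul_zero, add_zero] at hact
    have hα : α = 0 := by
      have h0 := hcoeff hs hact 0
      simp [map_smul, map_sub, repr1 hs, reprg hs, Finsupp.single_apply,
        Finsupp.sub_apply, Finsupp.smul_apply, smul_eq_mul] at h0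
      exact h0
    rw [hα, zero_smul, zero_add] at ha
    have hm := ht.mul_compat ν g g
    rw [hs.g_sq, hs.comul_ν] at hm
    simp only [LinearMap.coe_comp, Function.comp_apply, map_add, TensorProduct.map_tmul,
      LinearMap.mul'_apply, LinearMap.flip_apply] at hm
    rw [hν1, hgg, h1g, one_mul, ha, smul_mul_assoc, hgνg] at hm
    have hδ : δ = 0 := by
      have h2 := hcoeff hs hm 2
      simp [map_add, map_smul, map_neg, reprgν hs, reprν hs, Finsupp.single_apply,
        Finsupp.add_apply, Finsupp.smul_apply, Finsupp.neg_apply, smul_eq_mul] at h2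
      exact h2
    rw [hδ, zero_smul] at ha
    exact ha
  -- gν ▷ g = 0
  have hgνg' : t (g * ν) g = 0 := by
    have hp := ht.comul_hom (g * ν) g
    rw [comul_gν hs, hs.comul_g] at hp
    simp only [tmul_add, add_tmul, map_add, tensorTensorTensorComm_tmul,
      TensorProduct.map_tmul, lift.tmul] at hp
    rw [h1g, hgg] at hp
    obtain ⟨α, γ, ha⟩ := sw_g1prim hs hp
    have hact := act1 (g * ν) g
    rw [h1gν] at hact
    simp only [map_zero, LinearMap.zero_apply] at hact
    rw [ha] at hact
    simp only [map_add, map_smul, map_sub, h11, h1g, h1ν, smul_zero, add_zero] at hact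
    have hα : α = 0 := by
      have h0 := hcoeff hs hact 0
      simp [map_smul, map_sub, repr1 hs, reprg hs, Finsupp.single_apply,
        Finsupp.sub_apply, Finsupp.smul_apply, smul_eq_mul] at h0
      exact h0
    rw [hα, zero_smul, zero_add] at ha
    have hm := ht.mul_compat (g * ν) g g
    rw [hs.g_sq, comul_gν hs] at hm
    simp only [LinearMap.coe_comp, Function.comp_apply, map_add, TensorProduct.map_tmul,
      LinearMap.mul'_apply, LinearMap.flip_apply] at hm
    rw [hgν1, h1g, hgg, mul_one, ha, mul_smul_comm] at hm
    have hγ : γ = 0 := by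
      have h2 := hcoeff hs hm 3
      simp [map_add, map_smul, reprgν hs, reprν hs, Finsupp.single_apply,
        Finsupp.add_apply, Finsupp.smul_apply, smul_eq_mul] at h2
      exact h2.symm
    rw [hγ, zero_smul] at ha
    exact ha
  -- ν ▷ ν = 0
  have hνν : t ν ν = 0 := by
    have hp := ht.comul_hom ν ν
    rw [hs.comul_ν] at hp
    simp only [tmul_add, add_tmul, map_add, tensorTensorTensorComm_tmul,
      TensorProduct.map_tmul, lift.tmul] at hp
    rw [hgg, hgν, hν1, hνg, h1ν, h11] at hp
    simp only [tmul_zero, zero_tmul, add_zero, zero_add] at hp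
    exact sw_prim hs hp
  -- gν ▷ ν = 0
  have hgνν : t (g * ν) ν = 0 := by
    have h := ht.act_compat ν g ν
    rw [hs.comul_ν, hgν] at h
    simp only [LinearMap.coe_comp, Function.comp_apply, map_add, map_zero,
      TensorProduct.map_tmul, LinearMap.mul'_apply, LinearMap.flip_apply,
      LinearMap.id_coe, id_eq, LinearMap.zero_apply] at h
    rw [hνg, mul_zero, h1g, hνg_eq] at h
    simp only [map_zero, map_neg, LinearMap.zero_apply, LinearMap.neg_apply, zero_add] at h
    exact neg_eq_zero.mp h.symm
  -- ν ▷ gν = 0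
  have hνgν : t ν (g * ν) = 0 := by
    have h := ht.mul_compat ν g ν
    rw [hs.comul_ν] at h
    simp only [LinearMap.coe_comp, Function.comp_apply, map_add, TensorProduct.map_tmul,
      LinearMap.mul'_apply, LinearMap.flip_apply] at h
    rw [hgg, hνν, hνg, h1ν] at h
    simpa using h
  -- gν ▷ gν = 0
  have hgνgν : t (g * ν) (g * ν) = 0 := by
    have h := ht.mul_compat (g * ν) g ν
    rw [comul_gν hs] at h
    simp only [LinearMap.coe_comp, Function.comp_apply, map_add, TensorProduct.map_tmul,
      LinearMap.mul'_apply, LinearMap.flip_apply] at h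
    rw [h1g, hgνν, hgνg', hgν] at h
    simpa using h
  refine ⟨⟨h11, h1g, h1ν, h1gν, hg1, hgg, hgν, hggν⟩, ?_⟩
  intro x hx y hy
  simp only [Set.mem_insert_iff, Set.mem_singleton_iff] at hx hy
  rcases hx with rfl | rfl <;> rcases hy with rfl | rfl | rfl | rfl <;>
    assumption
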